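/- Let M = 2m be even, let A be a symmetric M×M matrix over a commutative ring, and fix k, ℓ ∈ {1,…,M}. Then Haf(A_{+e_k+e_ℓ}) = A_{kℓ} · Haf(A) + Σ_{j=1}^{M} A_{jℓ} · Haf((A_{+e_k})_{−j}), where A_{+e_k+e_ℓ} is the (M+2)×(M+2) matrix obtained from A by appending a copy of row/column k and a copy of row/column ℓ, A_{+e_k} is the (M+1)×(M+1) matrix obtained by appending a copy of row/column k, and (A_{+e_k})_{−j} is A_{+e_k} with its j-th row and column (j ∈ {1,…,M}) deleted. -/

import Mathlib

open Finset Matrix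

open scoped Classical in
/-- The hafnian of a matrix: the sum over all perfect matchings of the index set
(encoded as fixed-point-free involutions `σ`), of the product of the entries
`A i (σ i)` over the pairs `{i, σ i}` (each pair taken once, via `i < σ i`).
For an empty index type this is `1`, and for an odd-cardinality index type it is `0`. -/
noncomputable def hafnian {ι : Type*} [Fintype ι] [LinearOrder ι] {R : Type*} [CommRing R]
    (A : Matrix ι ι R) : R :=
  ∑ σ ∈ Finset.univ.filter
      (fun σ : Equiv.Perm ι => σ * σ = 1 ∧ ∀ i, σ i ≠ i),
    ∏ i ∈ Finset.univ.filter (fun i => i < σ i), A i (σ i)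

/-- `A_{−j}`: the matrix obtained from `A` by deleting row `j` and column `j`. -/
def delOne {ι : Type*} {R : Type*} (A : Matrix ι ι R) (j : ι) :
    Matrix {k : ι // k ≠ j} {k : ι // k ≠ j} R :=
  A.submatrix Subtype.val Subtype.val

/-- `A_{+e_k}`: the `(M+1) × (M+1)` matrix obtained from an `M × M` matrix `A` by appending a
copy of row/column `k` (the new last row and column duplicate the `k`-th ones, with new
diagonal entry `A k k`). -/
def appendOne {M : ℕ} {R : Type*} (A : Matrix (Fin M) (Fin M) R) (k : Fin M) :
    Matrix (Fin (M + 1)) (Fin (M + 1)) R :=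
  A.submatrix (Fin.snoc (fun i : Fin M => i) k) (Fin.snoc (fun i : Fin M => i) k)

/-!
Perfect matchings of a linearly ordered index set are fixed-point-free involutions. Grouping them
by the partner `j` of the largest index `a`, and removing the pair `{j, a}`, gives a bijection onto
the perfect matchings of the remaining indices, hence `Haf B = ∑_{j ≠ a} B_{j a} Haf(B_{-j,-a})`.
For `B = A_{+e_k+e_ℓ}` the largest index is the copy of `ℓ`: its partner is either the copy of `k`,
which leaves `A` with weight `A_{kℓ}`, or some `j ≤ 2m`, which leaves `(A_{+e_k})_{-j}` with weight
`A_{jℓ}`.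
-/

open Equiv

section PerfectMatchings

variable {ι κ : Type*} [Fintype ι] [DecidableEq ι] [Fintype κ] [DecidableEq κ]

def perfectMatchings (ι : Type*) [Fintype ι] [DecidableEq ι] : Finset (Perm ι) :=
  univ.filter fun σ => σ * σ = 1 ∧ ∀ i, σ i ≠ i

lemma mem_perfectMatchings {σ : Perm ι} :
    σ ∈ perfectMatchings ι ↔ Function.Involutive σ ∧ ∀ i, σ i ≠ i := by
  simp [perfectMatchings, Function.Involutive, Perm.ext_iff]

lemma permCongr_mem_perfectMatchings (e : κ ≃ ι) {σ : Perm κ} :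
    e.permCongr σ ∈ perfectMatchings ι ↔ σ ∈ perfectMatchings κ := by
  simp [mem_perfectMatchings, Function.Involutive, permCongr_apply, e.forall_congr_left,
    ← e.eq_symm_apply]

end PerfectMatchings

section MatchingProd

variable {ι κ R : Type*} [Fintype ι] [LinearOrder ι] [Fintype κ] [LinearOrder κ] [CommRing R]

def matchingProd (A : Matrix ι ι R) (σ : Perm ι) : R :=
  ∏ i ∈ univ.filter (fun i => i < σ i), A i (σ i)

lemma hafnian_eq_sum_matchingProd (A : Matrix ι ι R) :
    hafnian A = ∑ σ ∈ perfectMatchings ι, matchingProd A σ := by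
  unfold hafnian perfectMatchings matchingProd
  congr

lemma matchingProd_submatrix (A : Matrix ι ι R) (e : κ ≃o ι) (σ : Perm κ) :
    matchingProd (A.submatrix e e) σ = matchingProd A (e.toEquiv.permCongr σ) :=
  prod_equiv e.toEquiv (fun i => by rw [mem_filter_univ, mem_filter_univ]; simp [permCongr_apply])
    (by simp [permCongr_apply])

lemma hafnian_submatrix_orderIso (A : Matrix ι ι R) (e : κ ≃o ι) :
    hafnian (A.submatrix e e) = hafnian A := by
  simp only [hafnian_eq_sum_matchingProd, matchingProd_submatrix]
  exact sum_equiv e.toEquiv.permCongr (fun σ => (permCongr_mem_perfectMatchings _).symm)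
    fun _ _ => rfl

end MatchingProd

section InsertPair

variable {ι : Type*} [DecidableEq ι] {j a : ι}

def insertPair (j a : ι) (τ : Perm {i // i ≠ j ∧ i ≠ a}) : Perm ι :=
  swap j a * Perm.ofSubtype τ

lemma insertPair_apply_of_ne (τ : Perm {i // i ≠ j ∧ i ≠ a}) {x : ι} (hx : x ≠ j ∧ x ≠ a) :
    insertPair j a τ x = τ ⟨x, hx⟩ := by
  rw [insertPair, Perm.mul_apply, Perm.ofSubtype_apply_of_mem τ hx]
  exact swap_apply_of_ne_of_ne (τ _).2.1 (τ _).2.2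

lemma insertPair_apply_left (τ : Perm {i // i ≠ j ∧ i ≠ a}) : insertPair j a τ j = a := by
  rw [insertPair, Perm.mul_apply, Perm.ofSubtype_apply_of_not_mem τ (by simp), swap_apply_left]

lemma insertPair_apply_right (τ : Perm {i // i ≠ j ∧ i ≠ a}) : insertPair j a τ a = j := by
  rw [insertPair, Perm.mul_apply, Perm.ofSubtype_apply_of_not_mem τ (by simp), swap_apply_right]

lemma insertPair_injective : Function.Injective (insertPair j a) :=
  (mul_right_injective (swap j a)).comp Perm.ofSubtype_injective

variable [Fintype ι]

lemma insertPair_mem_perfectMatchings (hja : j ≠ a) {τ : Perm {i // i ≠ j ∧ i ≠ a}}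
    (hτ : τ ∈ perfectMatchings _) : insertPair j a τ ∈ perfectMatchings ι := by
  obtain ⟨hinv, hfix⟩ := mem_perfectMatchings.1 hτ
  refine mem_perfectMatchings.2 ⟨fun x => ?_, fun x => ?_⟩ <;>
    obtain hx | rfl | rfl : (x ≠ j ∧ x ≠ a) ∨ x = j ∨ x = a := by tauto
  · rw [insertPair_apply_of_ne τ hx, insertPair_apply_of_ne τ (τ _).2, Subtype.coe_eta, hinv]
  · rw [insertPair_apply_left, insertPair_apply_right]
  · rw [insertPair_apply_right, insertPair_apply_left]
  · rw [insertPair_apply_of_ne τ hx]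
    exact fun h => hfix _ (Subtype.ext h)
  · rwa [insertPair_apply_left, ne_comm]
  · rwa [insertPair_apply_right]

lemma exists_insertPair_eq {σ : Perm ι} (hσ : σ ∈ perfectMatchings ι) (hσa : σ a = j) :
    ∃ τ ∈ perfectMatchings _, insertPair j a τ = σ := by
  obtain ⟨hinv, hfix⟩ := mem_perfectMatchings.1 hσ
  have hσj : σ j = a := hσa ▸ hinv a
  have hj : ∀ x, σ x = j ↔ x = a := fun x => by rw [← hσa, σ.apply_eq_iff_eq]
  have ha : ∀ x, σ x = a ↔ x = j := fun x => by rw [← hσj, σ.apply_eq_iff_eq]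
  have hp : ∀ x, (σ x ≠ j ∧ σ x ≠ a) ↔ (x ≠ j ∧ x ≠ a) := fun x => by
    simp only [ne_eq, hj, ha, and_comm]
  refine ⟨σ.subtypePerm hp, mem_perfectMatchings.2 ⟨fun x => Subtype.ext (hinv x),
    fun x h => hfix x (congrArg Subtype.val h)⟩, Perm.ext fun x => ?_⟩
  obtain hx | rfl | rfl : (x ≠ j ∧ x ≠ a) ∨ x = j ∨ x = a := by tauto
  · rw [insertPair_apply_of_ne _ hx, Perm.subtypePerm_apply]
  · rw [insertPair_apply_left, hσj]
  · rw [insertPair_apply_right, hσa]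

end InsertPair

section Expansion

variable {ι R : Type*} [Fintype ι] [LinearOrder ι] [CommRing R] {j a : ι}

lemma filter_lt_insertPair (ha : IsTop a) (hja : j ≠ a) (τ : Perm {i // i ≠ j ∧ i ≠ a}) :
    univ.filter (fun i => i < insertPair j a τ i) =
      insert j ((univ.filter fun x => x < τ x).map (Function.Embedding.subtype _)) := by
  ext x
  simp only [mem_filter_univ, mem_insert, mem_map, Function.Embedding.coe_subtype]
  obtain hx | rfl | rfl : (x ≠ j ∧ x ≠ a) ∨ x = j ∨ x = a := by tauto
  · rw [insertPair_apply_of_ne τ hx, or_iff_right hx.1]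
    exact ⟨fun h => ⟨⟨x, hx⟩, h, rfl⟩, by rintro ⟨⟨y, hy⟩, hyτ, rfl⟩; exact hyτ⟩
  · simpa [insertPair_apply_left] using lt_of_le_of_ne (ha x) hja
  · simpa [insertPair_apply_right, hja.symm] using ha j

lemma matchingProd_insertPair (B : Matrix ι ι R) (ha : IsTop a) (hja : j ≠ a)
    (τ : Perm {i // i ≠ j ∧ i ≠ a}) :
    matchingProd B (insertPair j a τ) =
      B j a * matchingProd (B.submatrix Subtype.val Subtype.val) τ := by
  rw [matchingProd, filter_lt_insertPair ha hja, prod_insert (by simp), prod_map,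
    insertPair_apply_left]
  congr 1
  refine prod_congr rfl fun x _ => ?_
  rw [Function.Embedding.coe_subtype, insertPair_apply_of_ne τ x.2]
  rfl

lemma sum_matchingProd_filter_apply_eq (B : Matrix ι ι R) (ha : IsTop a) (hja : j ≠ a) :
    ∑ σ ∈ (perfectMatchings ι).filter (fun σ => σ a = j), matchingProd B σ =
      B j a * hafnian (B.submatrix (Subtype.val : {i // i ≠ j ∧ i ≠ a} → ι) Subtype.val) := by
  rw [hafnian_eq_sum_matchingProd, mul_sum]
  symm
  refine sum_bij (fun τ _ => insertPair j a τ) (fun τ hτ => ?_)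
    (fun _ _ _ _ h => insertPair_injective h) (fun σ hσ => ?_)
    (fun τ _ => (matchingProd_insertPair B ha hja τ).symm)
  · exact mem_filter.2 ⟨insertPair_mem_perfectMatchings hja hτ, insertPair_apply_right τ⟩
  · obtain ⟨τ, hτ, rfl⟩ := exists_insertPair_eq (mem_filter.1 hσ).1 (mem_filter.1 hσ).2
    exact ⟨τ, hτ, rfl⟩

-- `a` is the largest index so that every pair `{j, a}` of a matching is weighted by `B j a`.
lemma hafnian_eq_sum_mul_hafnian_submatrix (B : Matrix ι ι R) (ha : IsTop a) :
    hafnian B = ∑ j ∈ univ.erase a,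
      B j a * hafnian (B.submatrix (Subtype.val : {i // i ≠ j ∧ i ≠ a} → ι) Subtype.val) := by
  rw [hafnian_eq_sum_matchingProd, ← sum_fiberwise_of_maps_to (g := fun σ => σ a)
    (t := univ.erase a) fun σ hσ => mem_erase.2 ⟨(mem_perfectMatchings.1 hσ).2 a, mem_univ _⟩]
  exact sum_congr rfl fun j hj => sum_matchingProd_filter_apply_eq B ha (ne_of_mem_erase hj)

end Expansion

section FinSucc

variable {R : Type*} {n : ℕ}

lemma Fin.univ_erase_last : univ.erase (Fin.last n) = univ.map Fin.castSuccEmb := by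
  ext i
  simp [Fin.exists_castSucc_eq]

noncomputable def castSuccNeOrderIso (j : Fin n) :
    {i : Fin n // i ≠ j} ≃o {i : Fin (n + 1) // i ≠ j.castSucc ∧ i ≠ Fin.last n} :=
  StrictMono.orderIsoOfSurjective
    (fun i => ⟨i.1.castSucc, Fin.castSucc_injective n |>.ne i.2, Fin.castSucc_ne_last _⟩)
    (fun _ _ h => Fin.castSucc_lt_castSucc_iff.2 h)
    fun y => ⟨⟨y.1.castPred y.2.2, fun h => y.2.1 ((Fin.castPred_eq_iff_eq_castSucc _ _ _).1 h)⟩,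
      Subtype.ext (Fin.castSucc_castPred _ y.2.2)⟩

variable [CommRing R]

lemma hafnian_succ (C : Matrix (Fin (n + 1)) (Fin (n + 1)) R) :
    hafnian C = ∑ j : Fin n, C j.castSucc (Fin.last n) *
      hafnian (delOne (C.submatrix Fin.castSucc Fin.castSucc) j) := by
  rw [hafnian_eq_sum_mul_hafnian_submatrix C Fin.le_last, Fin.univ_erase_last, sum_map]
  refine sum_congr rfl fun j _ => congrArg (_ * ·) ?_
  exact (hafnian_submatrix_orderIso (C.submatrix Subtype.val Subtype.val)
    (castSuccNeOrderIso j)).symm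

lemma hafnian_delOne_last (C : Matrix (Fin (n + 1)) (Fin (n + 1)) R) :
    hafnian (delOne C (Fin.last n)) = hafnian (C.submatrix Fin.castSucc Fin.castSucc) := by
  rw [← hafnian_submatrix_orderIso _ (finSuccAboveOrderIso (Fin.last n))]
  congr 1
  ext i j
  simp [delOne, finSuccAboveOrderIso_apply]

end FinSucc

section AppendOne

variable {R : Type*} {n : ℕ} (A : Matrix (Fin n) (Fin n) R) (k : Fin n)

@[simp]
lemma appendOne_apply_castSucc_castSucc (i j : Fin n) :
    appendOne A k i.castSucc j.castSucc = A i j := by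
  simp [appendOne]

@[simp]
lemma appendOne_apply_castSucc_last (i : Fin n) :
    appendOne A k i.castSucc (Fin.last n) = A i k := by
  simp [appendOne]

@[simp]
lemma appendOne_apply_last_castSucc (j : Fin n) :
    appendOne A k (Fin.last n) j.castSucc = A k j := by
  simp [appendOne]

lemma appendOne_submatrix_castSucc : (appendOne A k).submatrix Fin.castSucc Fin.castSucc = A := by
  ext i j
  simp

lemma hafnian_appendOne [CommRing R] :
    hafnian (appendOne A k) = ∑ j, A j k * hafnian (delOne A j) := by
  simp only [hafnian_succ, appendOne_apply_castSucc_last, appendOne_submatrix_castSucc]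

end AppendOne

theorem hafnian_append_two_general {m : ℕ} {R : Type*} [CommRing R]
    (A : Matrix (Fin (2 * m)) (Fin (2 * m)) R) (k ℓ : Fin (2 * m)) :
    hafnian (appendOne (appendOne A k) ℓ.castSucc) =
      A k ℓ * hafnian A +
        ∑ j : Fin (2 * m), A j ℓ * hafnian (delOne (appendOne A k) j.castSucc) := by
  rw [hafnian_appendOne, Fin.sum_univ_castSucc, add_comm, hafnian_delOne_last,
    appendOne_submatrix_castSucc, appendOne_apply_last_castSucc]
  simp only [appendOne_apply_castSucc_castSucc]

/-- for a symmetric `2m × 2m` matrix `A` over a commutative ring and indices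
`k, ℓ`, the hafnian of `A_{+e_k+e_ℓ}` (append a copy of row/column `k`, then a copy of
row/column `ℓ`) satisfies
`Haf(A_{+e_k+e_ℓ}) = A_{kℓ}·Haf(A) + Σ_{j=1}^{2m} A_{jℓ}·Haf((A_{+e_k})_{−j})`,
where `(A_{+e_k})_{−j}` deletes row/column `j ∈ {1,…,2m}` from `A_{+e_k}`. -/
theorem hafnian_append_two {m : ℕ} {R : Type*} [CommRing R]
    (A : Matrix (Fin (2 * m)) (Fin (2 * m)) R) (hA : A.IsSymm) (k ℓ : Fin (2 * m)) :
    hafnian (appendOne (appendOne A k) ℓ.castSucc) =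
      A k ℓ * hafnian A +
        ∑ j : Fin (2 * m), A j ℓ * hafnian (delOne (appendOne A k) j.castSucc) :=
  hafnian_append_two_general A k ℓ
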